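/- Every stable model M of the constructed program P determines a refutation soup for φ: namely, the set Z of all disjudgments Γ_ξ ⊬ a such that the atom G_a(ξ) belongs to M, where Γ_ξ = { ψ[S] | E(ψ,S,ξ) ∈ M }, is a refutation soup for φ. -/

import Mathlib

namespace ASP

/-- A ground clause `head ← pos, ¬neg` of an answer set program. -/
structure GClause (α : Type) where
  head : α
  pos : List α
  neg : List α

variable {α : Type}

/-- Immediate-consequence operator of the Gelfond–Lifschitz reduct `P^M`:
`F(I) = I ∪ {a | some clause a ← a₁,…,aₙ of P^M has all aᵢ ∈ I}`. -/
def tcons (P : Set (GClause α)) (M : Set α) : Set α →o Set α where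
  toFun I := I ∪ {a | ∃ c ∈ P, c.head = a ∧ (∀ b ∈ c.pos, b ∈ I) ∧ (∀ b ∈ c.neg, b ∉ M)}
  monotone' := by
    intro I J h x hx
    rcases hx with hx | ⟨c, hc, h1, h2, h3⟩
    · exact Or.inl (h hx)
    · exact Or.inr ⟨c, hc, h1, fun b hb => h (h2 b hb), h3⟩

/-- The interpretation `I(P,M)`: least fixed point of the immediate-consequence
operator of the reduct `P^M`. -/
def interp (P : Set (GClause α)) (M : Set α) : Set α := OrderHom.lfp (tcons P M)

/-- `M` is a stable model (answer set) of `P` iff `M = I(P,M)`. -/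
def IsStable (P : Set (GClause α)) (M : Set α) : Prop := M = interp P M

end ASP
namespace MFOL

/-- Formulas of minimal first-order logic (→ and ∀ only, no function symbols),
in de Bruijn representation; individual terms are just variables `ℕ`. -/
inductive Form where
  | atom : ℕ → List ℕ → Form
  | imp : Form → Form → Form
  | all : Form → Form
deriving DecidableEq

def upRen (σ : ℕ → ℕ) : ℕ → ℕ
  | 0 => 0
  | n + 1 => σ n + 1

/-- Capture-avoiding (simultaneous) substitution of variables for variables. -/
def substF : (ℕ → ℕ) → Form → Form
  | σ, .atom p args => .atom p (args.map σ)
  | σ, .imp a b => .imp (substF σ a) (substF σ b)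
  | σ, .all a => .all (substF (upRen σ) a)

/-- Substitution of the variable `x` for the outermost bound variable. -/
def subst0 (x : ℕ) : Form → Form :=
  substF (fun n => match n with | 0 => x | n + 1 => n)

def shiftF : Form → Form := substF Nat.succ

/-- Natural deduction for minimal first-order logic. -/
inductive Prv : Set Form → Form → Prop
  | ax {Γ : Set Form} {φ : Form} : φ ∈ Γ → Prv Γ φ
  | impI {Γ : Set Form} {φ ψ : Form} : Prv (insert φ Γ) ψ → Prv Γ (.imp φ ψ)
  | impE {Γ : Set Form} {φ ψ : Form} : Prv Γ (.imp φ ψ) → Prv Γ φ → Prv Γ ψ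
  | allI {Γ : Set Form} {φ : Form} : Prv (shiftF '' Γ) φ → Prv Γ (.all φ)
  | allE {Γ : Set Form} {φ : Form} (x : ℕ) : Prv Γ (.all φ) → Prv Γ (subst0 x φ)

mutual
  /-- The Σ₁ class of the Mints hierarchy: Σ₁ ::= a | Π₁ → Σ₁. -/
  inductive IsSigma1 : Form → Prop
    | atom (p : ℕ) (args : List ℕ) : IsSigma1 (.atom p args)
    | imp {τ σ : Form} : IsPi1 τ → IsSigma1 σ → IsSigma1 (.imp τ σ)
  /-- The Π₁ class of the Mints hierarchy: Π₁ ::= a | Σ₁ → Π₁ | ∀x.Π₁. -/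
  inductive IsPi1 : Form → Prop
    | atom (p : ℕ) (args : List ℕ) : IsPi1 (.atom p args)
    | imp {σ π : Form} : IsSigma1 σ → IsPi1 π → IsPi1 (.imp σ π)
    | all {π : Form} : IsPi1 π → IsPi1 (.all π)
end

def IsAtomF (f : Form) : Prop := ∃ p args, f = Form.atom p args

/-- Premises τ₁,…,τ_q of a Σ₁ formula τ₁ → ⋯ → τ_q → c. -/
def premsOf : Form → List Form
  | .imp a b => a :: premsOf b
  | .atom p args => []
  | .all a => []

/-- Target atom of a Σ₁ formula. -/
def targetOf : Form → Form
  | .imp _ b => targetOf b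
  | f => f

/-- `Unfolds ψ prems b` : instantiating the ∀-blocks of the Π₁ formula
`ψ = ∀ȳ₁(σ₁ → ∀ȳ₂(σ₂ → ⋯ → ∀ȳ_k(σ_k → b')⋯))` at some variables x̄
yields the list of (instantiated) premises `prems = [σ₁[ȳ:=x̄],…]` and
the (instantiated) target atom `b = b'[ȳ:=x̄]`. -/
inductive Unfolds : Form → List Form → Form → Prop
  | atom (p : ℕ) (args : List ℕ) : Unfolds (.atom p args) [] (.atom p args)
  | imp {σ ψ : Form} {prems : List Form} {b : Form} :
      Unfolds ψ prems b → Unfolds (.imp σ ψ) (σ :: prems) b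
  | all {ψ : Form} {prems : List Form} {b : Form} (x : ℕ) :
      Unfolds (subst0 x ψ) prems b → Unfolds (.all ψ) prems b

/-- `closedAt k φ`: all free de Bruijn indices of `φ` are `< k`. -/
def closedAt : ℕ → Form → Prop
  | k, .atom _ args => ∀ x ∈ args, x < k
  | k, .imp a b => closedAt k a ∧ closedAt k b
  | k, .all a => closedAt (k + 1) a

end MFOL
namespace MFOL

/-- Subformula relation. -/
inductive SubfOf : Form → Form → Prop
  | refl (φ : Form) : SubfOf φ φ
  | impL {χ a b : Form} : SubfOf χ a → SubfOf χ (.imp a b)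
  | impR {χ a b : Form} : SubfOf χ b → SubfOf χ (.imp a b)
  | all {χ a : Form} : SubfOf χ a → SubfOf χ (.all a)

/-- Substitution instances of Π₁ subformulas of φ. -/
def Insts (φ : Form) : Set Form :=
  {τ | ∃ ψ, SubfOf ψ φ ∧ IsPi1 ψ ∧ ∃ σ : ℕ → ℕ, τ = substF σ ψ}

/-- An i-th answer in `Z` to the question challenging premise `σ`
asked at a disjudgment with environment `Γ`. -/
def IsAnswerOf (Z : Set (Set Form × Form)) (Γ : Set Form) (σ : Form) : Prop :=
  ∃ z ∈ Z, z.2 = targetOf σ ∧ Γ ∪ {τ | τ ∈ premsOf σ} ⊆ z.1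

/-- A refutation soup for φ: a set of disjudgments `Γ ⊬ a` containing the
initial disjudgment (the decomposition of φ) and such that every question
asked at a member of `Z` has some i-th answer in `Z`. -/
def IsSoup (φ : Form) (Z : Set (Set Form × Form)) : Prop :=
  ({τ | τ ∈ premsOf φ}, targetOf φ) ∈ Z ∧
  (∀ z ∈ Z, z.1 ⊆ Insts φ ∧ IsAtomF z.2) ∧
  (∀ z ∈ Z, ∀ ψ ∈ z.1, ∀ prems, Unfolds ψ prems z.2 → ∃ σ ∈ prems, IsAnswerOf Z z.1 σ)

/-- Length of a formula. -/
def fsize : Form → ℕ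
  | .atom _ args => 1 + args.length
  | .imp a b => fsize a + fsize b + 1
  | .all a => fsize a + 1

/-- Maximal arity of a predicate occurring in a formula. -/
def maxAr : Form → ℕ
  | .atom _ args => args.length
  | .imp a b => max (maxAr a) (maxAr b)
  | .all a => maxAr a

end MFOL
namespace MFOL

/-- Addresses: bit vectors (of length `n^r`). -/
abbrev Addr := List Bool

def addrLen (φ : Form) : ℕ := fsize φ ^ maxAr φ

def addr0 (φ : Form) : Addr := List.replicate (addrLen φ) false

def AddrOk (φ : Form) (ξ : Addr) : Prop := ξ.length = addrLen φ

/-- Atoms of the answer-set program constructed from φ. -/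
inductive PAt where
  | G : Form → Addr → PAt
  | E : Form → Addr → PAt
  | Ebar : Form → Addr → PAt
  | Q : Form → List Form → Form → Addr → PAt
  | A : ℕ → Form → List Form → Form → Addr → Addr → PAt
  | Abar : ℕ → Form → List Form → Form → Addr → Addr → PAt
  | Y : Form → List Form → Form → Addr → PAt
  | F : PAt

/-- Syntactic correctness of a question datum: ψ is an instance of a Π₁
subformula of φ and unfolds to the premises `prems` and target `tgt`. -/
def QOk (φ ψ : Form) (prems : List Form) (tgt : Form) : Prop :=
  ψ ∈ Insts φ ∧ Unfolds ψ prems tgt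

/-- The clauses of the answer-set program constructed from φ
('refutations into programs'): initialization facts at address 0…0,
answer-propagation clauses for environments and goals, choice clauses for
E/Ē and Aᵢ/Āᵢ, the question clause, totality clauses via Y and F, and
goal-uniqueness constraints. -/
inductive InSoupProg (φ : Form) : ASP.GClause PAt → Prop
  | initG : InSoupProg φ ⟨.G (targetOf φ) (addr0 φ), [], []⟩
  | initE {ψ} : ψ ∈ premsOf φ → InSoupProg φ ⟨.E ψ (addr0 φ), [], []⟩
  | initEbar {ψ} : ψ ∈ Insts φ → ψ ∉ premsOf φ →
      InSoupProg φ ⟨.Ebar ψ (addr0 φ), [], []⟩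
  | propE {i ψ prems tgt ξ η τ} : AddrOk φ ξ → AddrOk φ η → QOk φ ψ prems tgt →
      τ ∈ Insts φ →
      InSoupProg φ ⟨.E τ η, [.A i ψ prems tgt ξ η, .E τ ξ], []⟩
  | propD {i ψ prems tgt ξ η σ τ} : AddrOk φ ξ → AddrOk φ η → QOk φ ψ prems tgt →
      prems[i]? = some σ → τ ∈ premsOf σ →
      InSoupProg φ ⟨.E τ η, [.A i ψ prems tgt ξ η], []⟩
  | propG {i ψ prems tgt ξ η σ} : AddrOk φ ξ → AddrOk φ η → QOk φ ψ prems tgt →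
      prems[i]? = some σ →
      InSoupProg φ ⟨.G (targetOf σ) η, [.A i ψ prems tgt ξ η], []⟩
  | choiceE {ψ ξ} : ψ ∈ Insts φ → AddrOk φ ξ →
      InSoupProg φ ⟨.E ψ ξ, [], [.Ebar ψ ξ]⟩
  | choiceEbar {ψ ξ} : ψ ∈ Insts φ → AddrOk φ ξ →
      InSoupProg φ ⟨.Ebar ψ ξ, [], [.E ψ ξ]⟩
  | conflE {ψ ξ} : ψ ∈ Insts φ → AddrOk φ ξ →
      InSoupProg φ ⟨.F, [.E ψ ξ, .Ebar ψ ξ], [.F]⟩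
  | choiceA {i ψ prems tgt ξ η} : AddrOk φ ξ → AddrOk φ η → QOk φ ψ prems tgt →
      i < prems.length →
      InSoupProg φ ⟨.A i ψ prems tgt ξ η, [.Q ψ prems tgt ξ], [.Abar i ψ prems tgt ξ η]⟩
  | choiceAbar {i ψ prems tgt ξ η} : AddrOk φ ξ → AddrOk φ η → QOk φ ψ prems tgt →
      i < prems.length →
      InSoupProg φ ⟨.Abar i ψ prems tgt ξ η, [.Q ψ prems tgt ξ], [.A i ψ prems tgt ξ η]⟩
  | quest {ψ prems tgt ξ} : AddrOk φ ξ → QOk φ ψ prems tgt →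
      InSoupProg φ ⟨.Q ψ prems tgt ξ, [.E ψ ξ, .G tgt ξ], []⟩
  | totF {ψ prems tgt ξ} : AddrOk φ ξ → QOk φ ψ prems tgt →
      InSoupProg φ ⟨.F, [.Q ψ prems tgt ξ], [.Y ψ prems tgt ξ, .F]⟩
  | totY {i ψ prems tgt ξ η} : AddrOk φ ξ → AddrOk φ η → QOk φ ψ prems tgt →
      i < prems.length →
      InSoupProg φ ⟨.Y ψ prems tgt ξ, [.A i ψ prems tgt ξ η], []⟩
  | uniqG {a b ξ} : AddrOk φ ξ → a ≠ b →
      InSoupProg φ ⟨.F, [.G a ξ, .G b ξ], [.F]⟩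

/-- The constructed program as a set of clauses. -/
def SoupProg (φ : Form) : Set (ASP.GClause PAt) := {c | InSoupProg φ c}

end MFOL

/-!
The atoms of a stable model are exactly those derivable in the reduct, so each of them is
*supported*: it heads a clause whose positive body lies in the model and whose negative body
avoids it. Since every clause with head `F` has `F` in its negative body, `F` is never in a
stable model, which makes the constraints effective: environments at 0…0 are exactly the
premises of φ, and every question `Q` asked at a goal has a chosen answer `Aᵢ` (else the
totality clause fires). The propagation clauses then give the answering disjudgment at the
address `η` of that answer. Well-formedness (environments consist of instances of Π₁
subformulas, goals are atoms) is read off the supporting clauses, using that premises of Π₁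
instances are instances of Σ₁ subformulas.
-/

namespace ASP

variable {α : Type} {P : Set (GClause α)} {M : Set α}

theorem IsStable.head_mem (hM : IsStable P M) {c : GClause α} (hc : c ∈ P)
    (hpos : ∀ b ∈ c.pos, b ∈ M) (hneg : ∀ b ∈ c.neg, b ∉ M) : c.head ∈ M := by
  have hfix : tcons P M (interp P M) = interp P M := OrderHom.map_lfp (tcons P M)
  rw [← hM] at hfix
  exact hfix ▸ Or.inr ⟨c, hc, rfl, hpos, hneg⟩

theorem IsStable.exists_support (hM : IsStable P M) {a : α} (ha : a ∈ M) :
    ∃ c ∈ P, c.head = a ∧ (∀ b ∈ c.pos, b ∈ M) ∧ ∀ b ∈ c.neg, b ∉ M := by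
  let supported : Set α := {a | ∃ c ∈ P, c.head = a ∧ (∀ b ∈ c.pos, b ∈ M) ∧ ∀ b ∈ c.neg, b ∉ M}
  have hsub : supported ⊆ M := by
    rintro _ ⟨c, hc, rfl, hpos, hneg⟩
    exact hM.head_mem hc hpos hneg
  have hpre : tcons P M supported ≤ supported := by
    rintro _ (ha | ⟨c, hc, rfl, hpos, hneg⟩)
    · exact ha
    · exact ⟨c, hc, rfl, fun b hb => hsub (hpos b hb), hneg⟩
  rw [hM] at ha
  exact OrderHom.lfp_le _ hpre ha

end ASP

namespace MFOL

theorem upRen_id : upRen id = id := by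
  funext n; cases n <;> rfl

theorem upRen_comp (σ τ : ℕ → ℕ) : upRen σ ∘ upRen τ = upRen (σ ∘ τ) := by
  funext n; cases n <;> rfl

theorem substF_id (f : Form) : substF id f = f := by
  induction f with
  | atom p args => simp [substF]
  | imp a b iha ihb => simp [substF, iha, ihb]
  | all a ih => simp [substF, upRen_id, ih]

theorem substF_substF (σ τ : ℕ → ℕ) (f : Form) :
    substF σ (substF τ f) = substF (σ ∘ τ) f := by
  induction f generalizing σ τ with
  | atom p args => simp [substF]
  | imp a b iha ihb => simp [substF, iha, ihb]
  | all a ih => simp [substF, ih, upRen_comp]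

theorem SubfOf.trans {a b c : Form} (hab : SubfOf a b) (hbc : SubfOf b c) : SubfOf a c := by
  induction hbc with
  | refl => exact hab
  | impL _ ih => exact .impL ih
  | impR _ ih => exact .impR ih
  | all _ ih => exact .all ih

def SigmaInsts (φ : Form) : Set Form :=
  {σ | ∃ σ₀, SubfOf σ₀ φ ∧ IsSigma1 σ₀ ∧ ∃ θ : ℕ → ℕ, σ = substF θ σ₀}

theorem mem_sigmaInsts_self {φ : Form} (hφ : IsSigma1 φ) : φ ∈ SigmaInsts φ :=
  ⟨φ, .refl φ, hφ, id, (substF_id φ).symm⟩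

theorem sigmaInsts_mono {φ ψ : Form} (h : SubfOf ψ φ) : SigmaInsts ψ ⊆ SigmaInsts φ := by
  rintro σ ⟨σ₀, hsub, hσ₀, θ, rfl⟩
  exact ⟨σ₀, hsub.trans h, hσ₀, θ, rfl⟩

theorem IsSigma1.isAtomF_targetOf_substF :
    ∀ {σ : Form}, IsSigma1 σ → ∀ θ, IsAtomF (targetOf (substF θ σ))
  | .atom p args, _, θ => ⟨p, args.map θ, rfl⟩
  | .imp _ _, .imp _ hb, θ => hb.isAtomF_targetOf_substF θ

theorem IsSigma1.premsOf_substF :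
    ∀ {σ : Form}, IsSigma1 σ → ∀ θ, premsOf (substF θ σ) = (premsOf σ).map (substF θ)
  | .atom _ _, _, _ => rfl
  | .imp _ _, .imp _ hb, θ => by simp [substF, premsOf, hb.premsOf_substF θ]

theorem IsSigma1.pi1_subf_of_mem_premsOf :
    ∀ {σ : Form}, IsSigma1 σ → ∀ τ ∈ premsOf σ, IsPi1 τ ∧ SubfOf τ σ
  | .atom _ _, _, _, hτ => by simp [premsOf] at hτ
  | .imp _ _, .imp ha hb, τ, hτ => by
      rcases List.mem_cons.mp hτ with rfl | hτ
      · exact ⟨ha, .impL (.refl τ)⟩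
      · obtain ⟨hpi, hsub⟩ := hb.pi1_subf_of_mem_premsOf τ hτ
        exact ⟨hpi, .impR hsub⟩

theorem isAtomF_targetOf_of_mem_sigmaInsts {φ σ : Form} (hσ : σ ∈ SigmaInsts φ) :
    IsAtomF (targetOf σ) := by
  obtain ⟨σ₀, -, hσ₀, θ, rfl⟩ := hσ
  exact hσ₀.isAtomF_targetOf_substF θ

theorem mem_insts_of_mem_premsOf {φ σ τ : Form} (hσ : σ ∈ SigmaInsts φ)
    (hτ : τ ∈ premsOf σ) : τ ∈ Insts φ := by
  obtain ⟨σ₀, hsub, hσ₀, θ, rfl⟩ := hσ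
  rw [hσ₀.premsOf_substF θ] at hτ
  obtain ⟨τ₀, hτ₀, rfl⟩ := List.mem_map.mp hτ
  obtain ⟨hpi, hsub'⟩ := hσ₀.pi1_subf_of_mem_premsOf τ₀ hτ₀
  exact ⟨τ₀, hsub'.trans hsub, hpi, θ, rfl⟩

theorem Unfolds.mem_sigmaInsts_of_eq_substF {ψ : Form} {prems : List Form} {tgt : Form}
    (h : Unfolds ψ prems tgt) {ψ₀ : Form} (hψ₀ : IsPi1 ψ₀) {θ : ℕ → ℕ}
    (hψ : ψ = substF θ ψ₀) : ∀ σ ∈ prems, σ ∈ SigmaInsts ψ₀ := by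
  induction h generalizing ψ₀ θ with
  | atom => simp
  | imp _ ih =>
    cases hψ₀ with
    | atom => simp [substF] at hψ
    | all => simp [substF] at hψ
    | @imp σ₀ π hσ₀ hπ =>
      simp only [substF, Form.imp.injEq] at hψ
      rintro σ (_ | ⟨_, hσ⟩)
      · exact ⟨σ₀, .impL (.refl σ₀), hσ₀, θ, hψ.1⟩
      · exact sigmaInsts_mono (.impR (.refl π)) (ih hπ hψ.2 σ hσ)
  | all x _ ih =>
    cases hψ₀ with
    | atom => simp [substF] at hψ
    | imp => simp [substF] at hψ
    | @all π hπ =>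
      simp only [substF, Form.all.injEq] at hψ
      subst hψ
      exact fun σ hσ => sigmaInsts_mono (.all (.refl π)) (ih hπ (substF_substF _ _ π) σ hσ)

theorem Unfolds.mem_sigmaInsts {φ ψ : Form} (hψ : ψ ∈ Insts φ) {prems : List Form}
    {tgt : Form} (h : Unfolds ψ prems tgt) {σ : Form} (hσ : σ ∈ prems) :
    σ ∈ SigmaInsts φ := by
  obtain ⟨ψ₀, hsub, hψ₀, θ, rfl⟩ := hψ
  exact sigmaInsts_mono hsub (h.mem_sigmaInsts_of_eq_substF hψ₀ rfl σ hσ)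

theorem addrOk_addr0 (φ : Form) : AddrOk φ (addr0 φ) := by
  simp [AddrOk, addr0]

section StableModel

variable {φ : Form} {M : Set PAt} (hM : ASP.IsStable (SoupProg φ) M)
include hM

theorem F_not_mem : PAt.F ∉ M := by
  intro hF
  obtain ⟨c, hc, hhead, -, hneg⟩ := hM.exists_support hF
  cases hc <;> cases hhead <;> exact hneg .F (by simp) hF

theorem mem_insts_of_E_mem (hφ : IsSigma1 φ) {ψ : Form} {ξ : Addr} (h : PAt.E ψ ξ ∈ M) :
    ψ ∈ Insts φ := by
  obtain ⟨c, hc, hhead, -, -⟩ := hM.exists_support h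
  cases hc with
  | initE hψ =>
    cases hhead
    exact mem_insts_of_mem_premsOf (mem_sigmaInsts_self hφ) hψ
  | propE _ _ _ hτ => cases hhead; exact hτ
  | propD _ _ hq hσ hτ =>
    cases hhead
    exact mem_insts_of_mem_premsOf (hq.2.mem_sigmaInsts hq.1 (List.mem_of_getElem? hσ)) hτ
  | choiceE hψ _ => cases hhead; exact hψ
  | _ => cases hhead

theorem isAtomF_addrOk_of_G_mem (hφ : IsSigma1 φ) {a : Form} {ξ : Addr} (h : PAt.G a ξ ∈ M) :
    IsAtomF a ∧ AddrOk φ ξ := by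
  obtain ⟨c, hc, hhead, -, -⟩ := hM.exists_support h
  cases hc with
  | initG =>
    cases hhead
    exact ⟨isAtomF_targetOf_of_mem_sigmaInsts (mem_sigmaInsts_self hφ), addrOk_addr0 φ⟩
  | propG _ hη hq hσ =>
    cases hhead
    exact ⟨isAtomF_targetOf_of_mem_sigmaInsts
      (hq.2.mem_sigmaInsts hq.1 (List.mem_of_getElem? hσ)), hη⟩
  | _ => cases hhead

theorem E_addr0_mem_iff (hφ : IsSigma1 φ) {ψ : Form} :
    PAt.E ψ (addr0 φ) ∈ M ↔ ψ ∈ premsOf φ := by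
  refine ⟨fun hE => ?_, fun hψ => hM.head_mem (.initE hψ) (by simp) (by simp)⟩
  by_contra hψ
  have hinst := mem_insts_of_E_mem hM hφ hE
  have hEbar : PAt.Ebar ψ (addr0 φ) ∈ M := hM.head_mem (.initEbar hinst hψ) (by simp) (by simp)
  exact F_not_mem hM <| hM.head_mem (.conflE hinst (addrOk_addr0 φ))
    (by simp [hE, hEbar]) (by simp [F_not_mem hM])

theorem exists_A_mem_of_Q_mem {ψ : Form} {prems : List Form} {tgt : Form} {ξ : Addr}
    (hξ : AddrOk φ ξ) (hq : QOk φ ψ prems tgt) (hQ : PAt.Q ψ prems tgt ξ ∈ M) :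
    ∃ i η, PAt.A i ψ prems tgt ξ η ∈ M := by
  have hY : PAt.Y ψ prems tgt ξ ∈ M := by
    by_contra hY
    exact F_not_mem hM <| hM.head_mem (.totF hξ hq) (by simp [hQ]) (by simp [hY, F_not_mem hM])
  obtain ⟨c, hc, hhead, hpos, -⟩ := hM.exists_support hY
  cases hc with
  | @totY i _ _ _ _ η => cases hhead; exact ⟨i, η, hpos _ (by simp)⟩
  | _ => cases hhead

theorem lt_length_addrOk_of_A_mem {i : ℕ} {ψ : Form} {prems : List Form} {tgt : Form}
    {ξ η : Addr} (h : PAt.A i ψ prems tgt ξ η ∈ M) : i < prems.length ∧ AddrOk φ η := by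
  obtain ⟨c, hc, hhead, -, -⟩ := hM.exists_support h
  cases hc with
  | choiceA _ hη _ hi => cases hhead; exact ⟨hi, hη⟩
  | _ => cases hhead

end StableModel

end MFOL

open MFOL in
/-- Every stable model M of the constructed program determines a refutation
soup for φ: the set of all disjudgments Γ_ξ ⊬ a with G_a(ξ) ∈ M and
Γ_ξ = {ψ | E(ψ,ξ) ∈ M}. -/
theorem stmt16 (φ : MFOL.Form) (hφ : MFOL.IsSigma1 φ) (M : Set MFOL.PAt)
    (hM : ASP.IsStable (MFOL.SoupProg φ) M) :
    MFOL.IsSoup φ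
      {z | ∃ ξ a, MFOL.PAt.G a ξ ∈ M ∧ z = ({ψ | MFOL.PAt.E ψ ξ ∈ M}, a)} := by
  refine ⟨?_, ?_, ?_⟩
  · refine ⟨addr0 φ, targetOf φ, hM.head_mem .initG (by simp) (by simp), ?_⟩
    exact Prod.ext (Set.ext fun ψ => (E_addr0_mem_iff hM hφ).symm) rfl
  · rintro _ ⟨ξ, a, hG, rfl⟩
    exact ⟨fun ψ hψ => mem_insts_of_E_mem hM hφ hψ, (isAtomF_addrOk_of_G_mem hM hφ hG).1⟩
  · rintro _ ⟨ξ, a, hG, rfl⟩ ψ (hE : PAt.E ψ ξ ∈ M) prems hun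
    have hξ := (isAtomF_addrOk_of_G_mem hM hφ hG).2
    have hq : QOk φ ψ prems a := ⟨mem_insts_of_E_mem hM hφ hE, hun⟩
    have hQ : PAt.Q ψ prems a ξ ∈ M := hM.head_mem (.quest hξ hq) (by simp [hE, hG]) (by simp)
    obtain ⟨i, η, hA⟩ := exists_A_mem_of_Q_mem hM hξ hq hQ
    obtain ⟨hi, hη⟩ := lt_length_addrOk_of_A_mem hM hA
    have hσ : prems[i]? = some prems[i] := List.getElem?_eq_getElem hi
    refine ⟨prems[i], List.getElem_mem hi, _,
      ⟨η, _, hM.head_mem (.propG hξ hη hq hσ) (by simp [hA]) (by simp), rfl⟩, rfl, ?_⟩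
    rintro τ ((hτ : PAt.E τ ξ ∈ M) | hτ)
    · exact hM.head_mem (.propE (i := i) hξ hη hq (mem_insts_of_E_mem hM hφ hτ)) (by simp [hA, hτ]) (by simp)
    · exact hM.head_mem (.propD hξ hη hq hσ hτ) (by simp [hA]) (by simp)
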